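/- Let a, b ∈ ℂ, ε ∈ {1,−1}, and let u be a twice-differentiable complex-valued function solving the degenerate third Painlevé equation dP3(a,b,ε) on a domain with τ ≠ 0 and u(τ) ≠ 0. Define u₁(τ) := −(iεb/(8u(τ)²))·(τ(u'(τ) + ib) + (2ai − 1)u(τ)). Then on any subdomain where u₁(τ) ≠ 0, the function u₁ solves the degenerate third Painlevé equation dP3(a + i, b, ε), i.e., the same equation with the parameter a replaced by a + i (equivalently ia₁ = ia − 1) and b, ε unchanged. -/

import Mathlib

open Complex

/-- The degenerate third Painlevé equation dP3(a,b,ε), stated pointwise at τ: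
`u'' = (u')²/u − u'/τ + (1/τ)(−8εu² + 2ab) + b²/u`. -/
def DP3eq (a b ε : ℂ) (v : ℂ → ℂ) (τ : ℂ) : Prop :=
  deriv (deriv v) τ =
    (deriv v τ) ^ 2 / v τ - deriv v τ / τ
      + (1 / τ) * (-(8 * ε * (v τ) ^ 2) + 2 * a * b) + b ^ 2 / v τ

/-- The inverse Bäcklund transform
`u₁(τ) := −(iεb/(8u²))(τ(u' + ib) + (2ai − 1)u)`. -/
noncomputable def backlundDown (a b ε : ℂ) (u : ℂ → ℂ) : ℂ → ℂ :=
  fun τ => -(Complex.I * ε * b / (8 * (u τ) ^ 2))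
    * (τ * (deriv u τ + Complex.I * b) + (2 * a * Complex.I - 1) * u τ)

set_option maxHeartbeats 1000000 in
theorem step1 (S : Set ℂ) (a b ε : ℂ)
    (u : ℂ → ℂ)
    (hne : ∀ τ ∈ S, τ ≠ 0 ∧ u τ ≠ 0)
    (hu : ∀ τ ∈ S, DifferentiableAt ℂ u τ)
    (hu' : ∀ τ ∈ S, DifferentiableAt ℂ (deriv u) τ)
    (hdp3 : ∀ τ ∈ S, DP3eq a b ε u τ) :
    ∀ t ∈ S, HasDerivAt (backlundDown a b ε u)
      (-(Complex.I * ε * b) *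
        ((Complex.I * b + 2 * a * b) * u t - t * deriv u t ^ 2 - 8 * ε * (u t) ^ 3
          + t * b ^ 2 - 2 * Complex.I * b * (t * deriv u t)
          - (2 * a * Complex.I - 1) * (u t * deriv u t)) / (8 * (u t) ^ 3)) t := by
  intro t ht
  obtain ⟨ht0, hu0⟩ := hne t ht
  have hP : deriv (deriv u) t =
      (deriv u t) ^ 2 / u t - deriv u t / t
        + (1 / t) * (-(8 * ε * (u t) ^ 2) + 2 * a * b) + b ^ 2 / u t := hdp3 t ht
  have h1 := (hu t ht).hasDerivAt
  have h2 := (hu' t ht).hasDerivAt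
  have hden : (8 : ℂ) * (u t) ^ 2 ≠ 0 := by
    exact mul_ne_zero (by norm_num) (pow_ne_zero _ hu0)
  have hB := (((hasDerivAt_const t (Complex.I * ε * b)).div ((h1.pow 2).const_mul 8)
      hden).neg).mul
      (((hasDerivAt_id' t).mul (h2.add_const (Complex.I * b))).add
        (h1.const_mul (2 * a * Complex.I - 1)))
  have hB' : HasDerivAt (backlundDown a b ε u) _ t := hB
  have hP' : deriv (deriv u) t =
      (t * deriv u t ^ 2 - u t * deriv u t + u t * (-(8 * ε * (u t) ^ 2) + 2 * a * b)
        + t * b ^ 2) / (t * u t) := by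
    rw [hP]; field_simp
  convert hB' using 1
  rw [hP']
  simp only [Pi.mul_apply, Pi.div_apply, Pi.neg_apply, Pi.add_apply, Pi.sub_apply, Pi.pow_apply, Nat.cast_ofNat]
  field_simp
  ring

lemma aux_clear (A B W T C d : ℂ) (hW : W ≠ 0) (hT : T ≠ 0)
    (h : A * (T * W) = B ^ 2 * T - B * W + C * W + d ^ 2 * T) :
    A = B ^ 2 / W - B / T + 1 / T * C + d ^ 2 / W := by
  have hTW : T * W ≠ 0 := mul_ne_zero hT hW
  refine mul_right_cancel₀ hTW ?_
  rw [h]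
  field_simp

set_option maxHeartbeats 4000000 in
/-- If `u` solves dP3(a,b,ε), then its inverse Bäcklund transform `u₁` solves
dP3(a + i, b, ε) wherever it does not vanish. -/
theorem backlund_transformation_inverse
    (S : Set ℂ) (hS : IsOpen S) (a b ε : ℂ) (hε : ε = 1 ∨ ε = -1)
    (u : ℂ → ℂ)
    (hne : ∀ τ ∈ S, τ ≠ 0 ∧ u τ ≠ 0)
    (hu : ∀ τ ∈ S, DifferentiableAt ℂ u τ)
    (hu' : ∀ τ ∈ S, DifferentiableAt ℂ (deriv u) τ)
    (hdp3 : ∀ τ ∈ S, DP3eq a b ε u τ) :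
    ∀ τ ∈ S, backlundDown a b ε u τ ≠ 0 →
      DP3eq (a + Complex.I) b ε (backlundDown a b ε u) τ := by
  have I2 : Complex.I ^ 2 = -1 := Complex.I_sq
  have I3 : Complex.I ^ 3 = -Complex.I := by rw [pow_succ, I2, neg_one_mul]
  have I4 : Complex.I ^ 4 = 1 := by rw [pow_succ, I3, neg_mul, Complex.I_mul_I, neg_neg]
  have I5 : Complex.I ^ 5 = Complex.I := by rw [pow_succ, I4, one_mul]
  have I6 : Complex.I ^ 6 = -1 := by rw [pow_succ, I5, Complex.I_mul_I]
  have I7 : Complex.I ^ 7 = -Complex.I := by rw [pow_succ, I6, neg_one_mul]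
  have I8 : Complex.I ^ 8 = 1 := by rw [pow_succ, I7, neg_mul, Complex.I_mul_I, neg_neg]
  have I9 : Complex.I ^ 9 = Complex.I := by rw [pow_succ, I8, one_mul]
  have I10 : Complex.I ^ 10 = -1 := by rw [pow_succ, I9, Complex.I_mul_I]
  have I11 : Complex.I ^ 11 = -Complex.I := by rw [pow_succ, I10, neg_one_mul]
  have I12 : Complex.I ^ 12 = 1 := by rw [pow_succ, I11, neg_mul, Complex.I_mul_I, neg_neg]
  have I13 : Complex.I ^ 13 = Complex.I := by rw [pow_succ, I12, one_mul]
  have I14 : Complex.I ^ 14 = -1 := by rw [pow_succ, I13, Complex.I_mul_I]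
  have I15 : Complex.I ^ 15 = -Complex.I := by rw [pow_succ, I14, neg_one_mul]
  have I16 : Complex.I ^ 16 = 1 := by rw [pow_succ, I15, neg_mul, Complex.I_mul_I, neg_neg]
  intro τ hτS h₁ne
  obtain ⟨hτ0, hu0⟩ := hne τ hτS
  have hb : b ≠ 0 := by
    rintro rfl
    exact h₁ne (by simp [backlundDown])
  have hε0 : ε ≠ 0 := by rcases hε with rfl | rfl <;> norm_num
  have hN0 : τ * (deriv u τ + Complex.I * b) + (2 * a * Complex.I - 1) * u τ ≠ 0 := by
    intro h
    exact h₁ne (by simp only [backlundDown, h, mul_zero])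
  have hstep1 := step1 S a b ε u hne hu hu' hdp3
  have hd1 : ∀ t ∈ S, deriv (backlundDown a b ε u) t =
      -(Complex.I * ε * b) *
        ((Complex.I * b + 2 * a * b) * u t - t * deriv u t ^ 2 - 8 * ε * (u t) ^ 3
          + t * b ^ 2 - 2 * Complex.I * b * (t * deriv u t)
          - (2 * a * Complex.I - 1) * (u t * deriv u t)) / (8 * (u t) ^ 3) :=
    fun t ht => (hstep1 t ht).deriv
  have hEq : deriv (backlundDown a b ε u) =ᶠ[nhds τ]
      (fun t => -(Complex.I * ε * b) *
        ((Complex.I * b + 2 * a * b) * u t - t * deriv u t ^ 2 - 8 * ε * (u t) ^ 3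
          + t * b ^ 2 - 2 * Complex.I * b * (t * deriv u t)
          - (2 * a * Complex.I - 1) * (u t * deriv u t)) / (8 * (u t) ^ 3)) := by
    filter_upwards [hS.mem_nhds hτS] with t ht using hd1 t ht
  have E2 := hEq.deriv_eq
  have h1 := (hu τ hτS).hasDerivAt
  have h2 := (hu' τ hτS).hasDerivAt
  have hden3 : (8 : ℂ) * (u τ) ^ 3 ≠ 0 := mul_ne_zero (by norm_num) (pow_ne_zero _ hu0)
  have hM1 := h1.const_mul (Complex.I * b + 2 * a * b)
  have hM2 := hM1.sub ((hasDerivAt_id' τ).mul (h2.pow 2))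
  have hM3 := hM2.sub ((h1.pow 3).const_mul (8 * ε))
  have hM4 := hM3.add ((hasDerivAt_id' τ).mul_const (b ^ 2))
  have hM5 := hM4.sub (((hasDerivAt_id' τ).mul h2).const_mul (2 * Complex.I * b))
  have hM6 := hM5.sub ((h1.mul h2).const_mul (2 * a * Complex.I - 1))
  have hg2 := (hM6.const_mul (-(Complex.I * ε * b))).div ((h1.pow 3).const_mul 8) hden3
  have hP : deriv (deriv u) τ =
      (deriv u τ) ^ 2 / u τ - deriv u τ / τ
        + (1 / τ) * (-(8 * ε * (u τ) ^ 2) + 2 * a * b) + b ^ 2 / u τ := hdp3 τ hτS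
  have hP' : deriv (deriv u) τ =
      (τ * deriv u τ ^ 2 - u τ * deriv u τ + u τ * (-(8 * ε * (u τ) ^ 2) + 2 * a * b)
        + τ * b ^ 2) / (τ * u τ) := by
    rw [hP]; field_simp
  show deriv (deriv (backlundDown a b ε u)) τ =
      (deriv (backlundDown a b ε u) τ) ^ 2 / backlundDown a b ε u τ
        - deriv (backlundDown a b ε u) τ / τ
        + (1 / τ) * (-(8 * ε * (backlundDown a b ε u τ) ^ 2) + 2 * (a + Complex.I) * b)
        + b ^ 2 / backlundDown a b ε u τ
  rw [E2]
  refine (hg2.deriv).trans ?_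
  refine aux_clear _ _ _ _ _ _ h₁ne hτ0 ?_
  rw [hd1 τ hτS, hP']
  simp only [backlundDown]
  simp only [Pi.mul_apply, Pi.div_apply, Pi.neg_apply, Pi.add_apply, Pi.sub_apply, Pi.pow_apply, Nat.cast_ofNat]
  field_simp [hτ0, hu0]
  have h8 : (8:ℂ) ≠ 0 := by norm_num
  have hx3 : (8:ℂ) * u τ ^ 3 ≠ 0 := mul_ne_zero h8 (pow_ne_zero _ hu0)
  have hx2 : (8:ℂ) * u τ ^ 2 ≠ 0 := mul_ne_zero h8 (pow_ne_zero _ hu0)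
  have hD : ((8 * u τ ^ 3) ^ 2 * (8 * u τ ^ 3 * (8 * u τ ^ 2)) * ((8 * u τ ^ 2) ^ 2 * (8 * u τ ^ 2))) ≠ 0 :=
    mul_ne_zero (mul_ne_zero (pow_ne_zero 2 hx3) (mul_ne_zero hx3 hx2))
      (mul_ne_zero (pow_ne_zero 2 hx2) hx2)
  rcases hε with rfl | rfl <;>
    · ring_nf
      simp only [I2, I3, I4, I5, I6, I7, I8, I9, I10, I11, I12, I13, I14, I15, I16]
      ring
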